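/- arXiv:2310.14974 — 2 statements merged into one kernel-verified Lean document; each statement's English description precedes it below -/
import Mathlib

section
/- Let ε be a real number with 0 < ε ≤ 2, let θ be a nonzero real number with |θ| ≤ π, and let n_c be a natural number with (n_c : ℝ) ≥ log₂(|θ| / arccos(1 − ε²/2)) + 1. Then |e^{iθ/2^{n_c − 1}} − 1| ≤ ε. -/
/-! Halving θ n_c − 1 times brings it into [-a, a] with a = arccos (1 − ε²/2), and the chord
satisfies |e^{iφ} − 1|² = 2 − 2 cos φ, which is at most ε² as soon as cos φ ≥ cos a. -/

open Complex Real

lemma Real.le_rpow_of_logb_le {b x y : ℝ} (hb : 1 < b) (hx : 0 ≤ x) (h : logb b x ≤ y) :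
    x ≤ b ^ y := by
  rcases hx.eq_or_lt with rfl | hx
  · positivity
  · exact (logb_le_iff_le_rpow hb hx).1 h

lemma Real.le_cos_arccos {x : ℝ} (hx : x ≤ 1) : x ≤ cos (arccos x) := by
  rcases le_or_gt (-1) x with hx' | hx'
  · rw [cos_arccos hx' hx]
  · rw [arccos_of_le_neg_one hx'.le, cos_pi]
    exact hx'.le

lemma Complex.sq_norm_exp_ofReal_mul_I_sub_one (φ : ℝ) :
    ‖exp (φ * I) - 1‖ ^ 2 = 2 - 2 * Real.cos φ := by
  have hcos : Real.cos φ = 1 - 2 * Real.sin (φ / 2) ^ 2 := by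
    rw [← Real.cos_two_mul_eq_one_sub, mul_div_cancel₀ _ two_ne_zero]
  rw [mul_comm, norm_exp_I_mul_ofReal_sub_one, hcos, norm_mul, mul_pow, Real.norm_eq_abs,
    sq_abs]
  norm_num
  ring

lemma Complex.norm_exp_ofReal_mul_I_sub_one_le_of_abs_le_arccos {ε φ : ℝ} (hε : 0 ≤ ε)
    (hφ : |φ| ≤ arccos (1 - ε ^ 2 / 2)) : ‖exp (φ * I) - 1‖ ≤ ε := by
  have hcos : 1 - ε ^ 2 / 2 ≤ Real.cos φ := calc
    1 - ε ^ 2 / 2 ≤ Real.cos (arccos (1 - ε ^ 2 / 2)) := le_cos_arccos (by linarith [sq_nonneg ε])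
    _ ≤ Real.cos |φ| := cos_le_cos_of_nonneg_of_le_pi (abs_nonneg φ) (arccos_le_pi _) hφ
    _ = Real.cos φ := cos_abs φ
  refine (pow_le_pow_iff_left₀ (norm_nonneg _) hε two_ne_zero).1 ?_
  rw [sq_norm_exp_ofReal_mul_I_sub_one]
  linarith

theorem abs_exp_root_sub_one_le_general (ε θ : ℝ) (hε : 0 < ε) (n_c : ℕ)
    (hn : (n_c : ℝ) ≥ Real.log (|θ| / Real.arccos (1 - ε ^ 2 / 2)) / Real.log 2 + 1) :
    ‖Complex.exp ((θ / 2 ^ (n_c - 1) : ℝ) * Complex.I) - 1‖ ≤ ε := by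
  set a := arccos (1 - ε ^ 2 / 2)
  have ha : 0 < a := arccos_pos.2 (by linarith [pow_pos hε 2])
  have hlogb : logb 2 (|θ| / a) ≤ (n_c - 1 : ℕ) := by
    have hcast : (n_c : ℝ) ≤ (n_c - 1 : ℕ) + 1 := by norm_cast; omega
    rw [← log_div_log]
    linarith
  have hpow : |θ| / a ≤ 2 ^ (n_c - 1) := by
    simpa using le_rpow_of_logb_le one_lt_two (by positivity) hlogb
  refine norm_exp_ofReal_mul_I_sub_one_le_of_abs_le_arccos hε.le ?_
  rw [abs_div, abs_pow, abs_two, div_le_iff₀ (by positivity), mul_comm]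
  rwa [div_le_iff₀ ha] at hpow

theorem abs_exp_root_sub_one_le (ε θ : ℝ) (hε : 0 < ε) (hε2 : ε ≤ 2)
    (hθ : θ ≠ 0) (hθπ : |θ| ≤ Real.pi) (n_c : ℕ)
    (hn : (n_c : ℝ) ≥ Real.log (|θ| / Real.arccos (1 - ε ^ 2 / 2)) / Real.log 2 + 1) :
    ‖Complex.exp ((θ / 2 ^ (n_c - 1) : ℝ) * Complex.I) - 1‖ ≤ ε :=
  abs_exp_root_sub_one_le_general ε θ hε n_c hn
end

section
/- Let W be a 2×2 complex unitary matrix, let d : Fin 2 → ℝ with |d j| ≤ π for each j, let ε be a real number with 0 < ε ≤ 2, and let N be a positive natural number with (N : ℝ) ≥ (max_j |d j|) / arccos(1 − ε²/2). Then the matrix V = W · diagonal(fun j => e^{i·d j / N}) · Wᴴ satisfies ‖V − 1‖ ≤ ε, where ‖·‖ is the L² operator norm on 2×2 complex matrices. -/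
open Complex Real Matrix
open scoped Matrix.Norms.L2Operator

/-!
Conjugation by a unitary `W` preserves the operator norm and fixes `1`, so
`‖W D Wᴴ - 1‖ = ‖D - 1‖`, and for the diagonal `D` this is `max_j |e^{i d_j / N} - 1|`.
Since `|e^{ix} - 1|² = 2 - 2 cos x`, each entry is at most `ε` as soon as
`|x| ≤ arccos (1 - ε² / 2)`, which the lower bound on `N` guarantees for `x = d_j / N`.
-/

theorem Real.le_cos_arccos_s4 {y : ℝ} (hy : y ≤ 1) : y ≤ cos (arccos y) := by
  rcases le_or_gt (-1) y with hy' | hy'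
  · exact (cos_arccos hy' hy).ge
  · rw [arccos_of_le_neg_one hy'.le, cos_pi]
    exact hy'.le

theorem Complex.norm_exp_ofReal_mul_I_sub_one_sq (x : ℝ) :
    ‖exp (x * I) - 1‖ ^ 2 = 2 - 2 * Real.cos x := by
  have hcos : Real.cos x = 1 - 2 * Real.sin (x / 2) ^ 2 := by
    have hdouble := Real.cos_two_mul' (x / 2)
    rw [mul_div_cancel₀ x two_ne_zero] at hdouble
    linarith [Real.cos_sq_add_sin_sq (x / 2)]
  rw [mul_comm, norm_exp_I_mul_ofReal_sub_one, norm_mul, mul_pow, Real.norm_eq_abs, sq_abs, hcos]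
  norm_num
  ring

theorem Complex.norm_exp_ofReal_mul_I_sub_one_le {x ε : ℝ} (hε : 0 ≤ ε)
    (hx : |x| ≤ arccos (1 - ε ^ 2 / 2)) : ‖exp (x * I) - 1‖ ≤ ε := by
  have hcos : 1 - ε ^ 2 / 2 ≤ Real.cos x :=
    calc 1 - ε ^ 2 / 2 ≤ Real.cos (arccos (1 - ε ^ 2 / 2)) := le_cos_arccos_s4 (by nlinarith)
      _ ≤ Real.cos |x| := cos_le_cos_of_nonneg_of_le_pi (abs_nonneg x) (arccos_le_pi _) hx
      _ = Real.cos x := cos_abs x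
  rw [← pow_le_pow_iff_left₀ (norm_nonneg _) hε two_ne_zero, norm_exp_ofReal_mul_I_sub_one_sq]
  linarith

-- `b = 0` is allowed: then `a / b = 0`.
theorem abs_div_le_of_abs_div_le {a b c : ℝ} (hb : 0 ≤ b) (hc : 0 < c) (h : |a| / c ≤ b) :
    |a / b| ≤ c := by
  rw [abs_div, abs_of_nonneg hb]
  exact div_le_of_le_mul₀ hb hc.le (by rwa [div_le_iff₀ hc, mul_comm] at h)

theorem CStarRing.norm_mul_mul_star_sub_one {E : Type*} [NormedRing E] [StarRing E] [CStarRing E]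
    {U : E} (hU : U ∈ unitary E) (A : E) : ‖U * A * star U - 1‖ = ‖A - 1‖ := by
  have hconj : U * A * star U - 1 = U * (A - 1) * star U := by
    rw [mul_sub, sub_mul, mul_one, Unitary.mul_star_self_of_mem hU]
  rw [hconj, norm_mul_mem_unitary _ (Unitary.star_mem hU), norm_mem_unitary_mul _ hU]

theorem root_close_to_id_general (W : Matrix (Fin 2) (Fin 2) ℂ)
    (hW : W ∈ Matrix.unitaryGroup (Fin 2) ℂ) (d : Fin 2 → ℝ)
    (ε : ℝ) (hε : 0 < ε)
    (N : ℕ)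
    (hNge : (N : ℝ) ≥ max |d 0| |d 1| / Real.arccos (1 - ε ^ 2 / 2)) :
    ‖W * Matrix.diagonal (fun j => Complex.exp ((d j / N : ℝ) * Complex.I)) * Wᴴ - 1‖ ≤ ε := by
  have hc : 0 < arccos (1 - ε ^ 2 / 2) := arccos_pos.2 (by nlinarith)
  have hphase (j : Fin 2) : |d j / N| ≤ arccos (1 - ε ^ 2 / 2) := by
    refine abs_div_le_of_abs_div_le N.cast_nonneg hc (le_trans ?_ hNge)
    gcongr
    fin_cases j <;> simp
  calc ‖W * diagonal (fun j => exp ((d j / N : ℝ) * I)) * Wᴴ - 1‖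
      = ‖diagonal (fun j => exp ((d j / N : ℝ) * I)) - 1‖ := by
        rw [← star_eq_conjTranspose]
        exact CStarRing.norm_mul_mul_star_sub_one hW _
    _ = ‖fun j => exp ((d j / N : ℝ) * I) - 1‖ := by
        rw [← diagonal_one, diagonal_sub, l2_opNorm_diagonal]
    _ ≤ ε := (pi_norm_le_iff_of_nonneg hε.le).2 fun j =>
        norm_exp_ofReal_mul_I_sub_one_le hε.le (hphase j)

theorem root_close_to_id (W : Matrix (Fin 2) (Fin 2) ℂ)
    (hW : W ∈ Matrix.unitaryGroup (Fin 2) ℂ) (d : Fin 2 → ℝ)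
    (hd : ∀ j, |d j| ≤ Real.pi) (ε : ℝ) (hε : 0 < ε) (hε2 : ε ≤ 2)
    (N : ℕ) (hN : 0 < N)
    (hNge : (N : ℝ) ≥ max |d 0| |d 1| / Real.arccos (1 - ε ^ 2 / 2)) :
    ‖W * Matrix.diagonal (fun j => Complex.exp ((d j / N : ℝ) * Complex.I)) * Wᴴ - 1‖ ≤ ε :=
  root_close_to_id_general W hW d ε hε N hNge
end
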